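/- Let K be a proper cone in ℝⁿ, A an n×n real matrix with AK ⊆ K, x ∈ K, and λ ∈ ℝ. If (A - λI)^j x is a nonzero element of K for every nonnegative integer j, then λ < ρ_x(A). -/

import Mathlib

open Filter Matrix
open scoped Topology

/-- The local spectral radius of `A` at `x`, defined as `limsup ‖A^m x‖^(1/m)`. -/
noncomputable def localRho {n : ℕ} (A : Matrix (Fin n) (Fin n) ℝ) (b : Fin n → ℝ) : ℝ :=
  limsup (fun m : ℕ => ‖(A ^ m).mulVec b‖ ^ ((1 : ℝ) / m)) atTop

/-- A proper cone in `ℝⁿ`: closed, convex, pointed, with nonempty interior. -/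
structure IsProperCone {n : ℕ} (K : Set (Fin n → ℝ)) : Prop where
  convex : Convex ℝ K
  isClosed : IsClosed K
  smul_mem : ∀ c : ℝ, 0 ≤ c → ∀ x ∈ K, c • x ∈ K
  pointed : K ∩ (-K) = {0}
  full : (interior K).Nonempty

/-!
Suppose `ρ_x(A) ≤ λ`. For `μ > λ` the Neumann series `S μ = ∑ μ^{-(m+1)} A^m x` converges, solves
`A S = μ S - x`, and, since `A - λ` commutes with `A` and every `(A - λ)^j x` lies in `K`, so does
every `(A - λ)^j S μ`. With `y_j = (A - λ)^j x` this gives `(A - λ)^{j+1} S = (μ - λ) (A - λ)^j S - y_j`, so for a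
functional `w ≥ 0` on `K` with `w y_n > 0` we get `w y_n ≤ (μ - λ)^{n+1} w (S μ)`. On the other hand
`χ_A(μ) S μ = adj(μ - A) x`, so `S` has a pole of order at most `n` at `λ` and
`(μ - λ)^{n+1} w (S μ) → 0` as `μ → λ⁺`: a contradiction.
-/

open Polynomial

namespace IsProperCone

variable {n : ℕ} {K : Set (Fin n → ℝ)}

theorem zero_mem (hK : IsProperCone K) : (0 : Fin n → ℝ) ∈ K := by
  obtain ⟨v, hv⟩ := hK.full
  simpa using hK.smul_mem 0 le_rfl v (interior_subset hv)

theorem add_mem (hK : IsProperCone K) {u v : Fin n → ℝ} (hu : u ∈ K) (hv : v ∈ K) :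
    u + v ∈ K := by
  have hmid := hK.convex hu hv (by norm_num : (0 : ℝ) ≤ 1 / 2) (by norm_num : (0 : ℝ) ≤ 1 / 2)
    (by norm_num)
  convert hK.smul_mem 2 zero_le_two _ hmid using 1
  module

theorem sum_mem (hK : IsProperCone K) {ι : Type*} {s : Finset ι} {f : ι → Fin n → ℝ}
    (hf : ∀ i ∈ s, f i ∈ K) : ∑ i ∈ s, f i ∈ K := by
  classical
  induction s using Finset.induction with
  | empty => simpa using hK.zero_mem
  | insert i s hi ih =>
    rw [Finset.sum_insert hi]
    exact hK.add_mem (hf i (Finset.mem_insert_self i s))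
      (ih fun j hj => hf j (Finset.mem_insert_of_mem hj))

theorem hasSum_mem (hK : IsProperCone K) {ι : Type*} {f : ι → Fin n → ℝ} {s : Fin n → ℝ}
    (hf : HasSum f s) (hfK : ∀ i, f i ∈ K) : s ∈ K :=
  hK.isClosed.mem_of_tendsto hf (Eventually.of_forall fun _ => hK.sum_mem fun i _ => hfK i)

theorem exists_dual_pos (hK : IsProperCone K) {y : Fin n → ℝ} (hy : y ∈ K) (hy0 : y ≠ 0) :
    ∃ w : (Fin n → ℝ) →L[ℝ] ℝ, (∀ v ∈ K, 0 ≤ w v) ∧ 0 < w y := by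
  have hny : -y ∉ K := fun hmem => hy0 <| by
    have : y ∈ K ∩ -K := ⟨hy, by simpa using hmem⟩
    rwa [hK.pointed] at this
  obtain ⟨f, u, hfK, hfy⟩ := geometric_hahn_banach_closed_point hK.convex hK.isClosed hny
  have hu : 0 < u := by simpa using hfK 0 hK.zero_mem
  refine ⟨-f, fun v hv => ?_, by simpa using hu.trans hfy⟩
  -- `f < u` on the cone `K`; rescaling a `v ∈ K` with `f v > 0` to `f v = u` is impossible
  by_contra! hv0
  have hfv : 0 < f v := by simpa using hv0
  have := hfK _ (hK.smul_mem (u / f v) (by positivity) v hv)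
  rw [map_smul, smul_eq_mul, div_mul_cancel₀ _ hfv.ne'] at this
  exact lt_irrefl _ this

end IsProperCone

theorem Matrix.pow_mulVec_mem {ι R : Type*} [Fintype ι] [DecidableEq ι] [Semiring R]
    {A : Matrix ι ι R} {K : Set (ι → R)} (hA : ∀ v ∈ K, A *ᵥ v ∈ K) (m : ℕ) {v : ι → R}
    (hv : v ∈ K) : (A ^ m) *ᵥ v ∈ K := by
  induction m with
  | zero => simpa using hv
  | succ m ih => simpa [pow_succ', ← mulVec_mulVec] using hA _ ih

section LocalSpectralRadius

attribute [local instance] Matrix.linftyOpNormedAddCommGroup Matrix.linftyOpNormedRing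

variable {n : ℕ} (A : Matrix (Fin n) (Fin n) ℝ) (x : Fin n → ℝ)

theorem exists_norm_pow_mulVec_le : ∃ C, 0 ≤ C ∧ ∀ m ≥ 1, ‖(A ^ m) *ᵥ x‖ ≤ C ^ m := by
  refine ⟨‖A‖ * max 1 ‖x‖, by positivity, fun m hm => ?_⟩
  calc ‖(A ^ m) *ᵥ x‖ ≤ ‖A ^ m‖ * ‖x‖ := linfty_opNorm_mulVec _ _
    _ ≤ ‖A‖ ^ m * max 1 ‖x‖ ^ m := by
      gcongr
      · exact norm_pow_le' A hm
      · exact (le_max_right 1 ‖x‖).trans (le_self_pow₀ (le_max_left 1 ‖x‖) (by omega))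
    _ = (‖A‖ * max 1 ‖x‖) ^ m := (mul_pow _ _ _).symm

theorem isBoundedUnder_norm_pow_mulVec_rpow :
    IsBoundedUnder (· ≤ ·) atTop fun m : ℕ => ‖(A ^ m) *ᵥ x‖ ^ ((1 : ℝ) / m) := by
  obtain ⟨C, hC0, hC⟩ := exists_norm_pow_mulVec_le A x
  refine isBoundedUnder_of_eventually_le (a := C) ?_
  filter_upwards [eventually_ge_atTop 1] with m hm
  calc ‖(A ^ m) *ᵥ x‖ ^ ((1 : ℝ) / m) ≤ (C ^ m) ^ ((1 : ℝ) / m) :=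
        Real.rpow_le_rpow (norm_nonneg _) (hC m hm) (by positivity)
    _ = C := by rw [one_div, Real.pow_rpow_inv_natCast hC0 (by omega)]

theorem localRho_nonneg : 0 ≤ localRho A x :=
  le_limsup_of_frequently_le (Frequently.of_forall fun _ => by positivity)
    (isBoundedUnder_norm_pow_mulVec_rpow A x)

theorem eventually_norm_pow_mulVec_le_of_localRho_lt {t : ℝ} (ht : localRho A x < t) :
    ∀ᶠ m : ℕ in atTop, ‖(A ^ m) *ᵥ x‖ ≤ t ^ m := by
  filter_upwards [eventually_lt_of_limsup_lt ht (isBoundedUnder_norm_pow_mulVec_rpow A x),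
    eventually_ge_atTop 1] with m hm hm1
  have := pow_le_pow_left₀ (by positivity) hm.le m
  rwa [one_div, Real.rpow_inv_natCast_pow (norm_nonneg _) (by omega)] at this

theorem summable_neumann_of_localRho_lt {μ : ℝ} (hμ : localRho A x < μ) :
    Summable fun m : ℕ => (μ⁻¹) ^ (m + 1) • ((A ^ m) *ᵥ x) := by
  have hμ0 : 0 < μ := (localRho_nonneg A x).trans_lt hμ
  obtain ⟨t, hρt, htμ⟩ := exists_between hμ
  have ht0 : 0 ≤ t := (localRho_nonneg A x).trans hρt.le
  have hgeom := (summable_geometric_of_lt_one (div_nonneg ht0 hμ0.le)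
    ((div_lt_one hμ0).2 htμ)).mul_left μ⁻¹
  refine Summable.of_norm_bounded_eventually_nat hgeom ?_
  filter_upwards [eventually_norm_pow_mulVec_le_of_localRho_lt A x hρt] with m hm
  calc ‖(μ⁻¹) ^ (m + 1) • ((A ^ m) *ᵥ x)‖ = (μ⁻¹) ^ (m + 1) * ‖(A ^ m) *ᵥ x‖ := by
        rw [norm_smul, norm_pow, norm_inv, Real.norm_of_nonneg hμ0.le]
    _ ≤ (μ⁻¹) ^ (m + 1) * t ^ m := by gcongr
    _ = μ⁻¹ * (t / μ) ^ m := by rw [div_eq_mul_inv, mul_pow, pow_succ]; ring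

end LocalSpectralRadius

section Neumann

variable {ι : Type*} [Fintype ι] [DecidableEq ι]

theorem mulVec_eq_of_hasSum_neumann {A : Matrix ι ι ℝ} {x S : ι → ℝ} {μ : ℝ} (hμ : μ ≠ 0)
    (hS : HasSum (fun m : ℕ => (μ⁻¹) ^ (m + 1) • ((A ^ m) *ᵥ x)) S) : A *ᵥ S = μ • S - x := by
  have hAS := hS.map (mulVecLin A) (Continuous.matrix_mulVec continuous_const continuous_id)
  have hshift := ((hasSum_nat_add_iff' 1).2 hS).const_smul μ
  have hterms : (mulVecLin A ∘ fun m : ℕ => (μ⁻¹) ^ (m + 1) • ((A ^ m) *ᵥ x)) =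
      fun m => μ • ((μ⁻¹) ^ (m + 1 + 1) • ((A ^ (m + 1)) *ᵥ x)) := by
    ext1 m
    rw [Function.comp_apply, mulVecLin_apply, mulVec_smul, mulVec_mulVec, ← pow_succ', smul_smul,
      pow_succ _ (m + 1), mul_left_comm, mul_inv_cancel₀ hμ, mul_one]
  have hsum : μ • (S - ∑ i ∈ Finset.range 1, (μ⁻¹) ^ (i + 1) • ((A ^ i) *ᵥ x)) = μ • S - x := by
    simp [smul_sub, smul_smul, hμ]
  rw [hterms] at hAS
  rw [hsum] at hshift
  exact hAS.unique hshift

theorem eval_charpoly_smul_eq_adjugate_mulVec {R : Type*} [CommRing R] {A : Matrix ι ι R}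
    {x S : ι → R} {μ : R} (h : A *ᵥ S = μ • S - x) :
    A.charpoly.eval μ • S = adjugate (scalar ι μ - A) *ᵥ x := by
  have hx : (scalar ι μ - A) *ᵥ S = x := by
    rw [sub_mulVec, h, scalar_apply, ← smul_one_eq_diagonal, smul_mulVec, one_mulVec]
    abel
  rw [eval_charpoly, ← hx, mulVec_mulVec, adjugate_mul, smul_mulVec, one_mulVec]

end Neumann

theorem le_pow_succ_mul_of_eq_mul_sub {s b : ℕ → ℝ} {c : ℝ} (hc : 0 ≤ c) (hs : ∀ j, 0 ≤ s j)
    (hb : ∀ j, 0 ≤ b j) (hrec : ∀ j, s (j + 1) = c * s j - b j) (j : ℕ) :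
    b j ≤ c ^ (j + 1) * s 0 := by
  have hdecay : ∀ j, s j ≤ c ^ j * s 0 := by
    intro j
    induction j with
    | zero => simp
    | succ j ih =>
      calc s (j + 1) ≤ c * s j := by linarith [hrec j, hb j]
        _ ≤ c * (c ^ j * s 0) := by gcongr
        _ = c ^ (j + 1) * s 0 := by ring
  calc b j ≤ c * s j := by linarith [hrec j, hs (j + 1)]
    _ ≤ c * (c ^ j * s 0) := by gcongr; exact hdecay j
    _ = c ^ (j + 1) * s 0 := by ring

namespace IsProperCone

variable {n : ℕ} {K : Set (Fin n → ℝ)}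

theorem mulVec_mem_of_hasSum_neumann (hK : IsProperCone K) {A M : Matrix (Fin n) (Fin n) ℝ} (hA : ∀ v ∈ K, A *ᵥ v ∈ K)
    (hAM : Commute A M) {x S : Fin n → ℝ} (hMx : M *ᵥ x ∈ K) {μ : ℝ} (hμ : 0 < μ)
    (hS : HasSum (fun m : ℕ => (μ⁻¹) ^ (m + 1) • ((A ^ m) *ᵥ x)) S) : M *ᵥ S ∈ K := by
  refine hK.hasSum_mem (hS.map (mulVecLin M) (Continuous.matrix_mulVec continuous_const
    continuous_id)) fun m => ?_
  rw [Function.comp_apply, mulVecLin_apply, mulVec_smul, mulVec_mulVec, ← (hAM.pow_left m).eq,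
    ← mulVec_mulVec]
  exact hK.smul_mem _ (by positivity) _ (pow_mulVec_mem hA m hMx)

theorem apply_sub_smul_pow_mulVec_le (hK : IsProperCone K) {A : Matrix (Fin n) (Fin n) ℝ} (hA : ∀ v ∈ K, A *ᵥ v ∈ K)
    {x S : Fin n → ℝ} {lam μ : ℝ} (hlam : ∀ j : ℕ, ((A - lam • 1) ^ j) *ᵥ x ∈ K)
    (hμ : 0 < μ) (hlamμ : lam ≤ μ)
    (hS : HasSum (fun m : ℕ => (μ⁻¹) ^ (m + 1) • ((A ^ m) *ᵥ x)) S)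
    {w : (Fin n → ℝ) →L[ℝ] ℝ} (hw : ∀ v ∈ K, 0 ≤ w v) (j : ℕ) :
    w (((A - lam • 1) ^ j) *ᵥ x) ≤ (μ - lam) ^ (j + 1) * w S := by
  set B := A - lam • (1 : Matrix (Fin n) (Fin n) ℝ)
  have hAB : Commute A B := (Commute.refl A).sub_right ((Commute.one_right A).smul_right lam)
  have hBS : B *ᵥ S = (μ - lam) • S - x := by
    rw [sub_mulVec, mulVec_eq_of_hasSum_neumann hμ.ne' hS, smul_mulVec, one_mulVec, sub_smul]
    abel
  have hrec (j : ℕ) : (B ^ (j + 1)) *ᵥ S = (μ - lam) • ((B ^ j) *ᵥ S) - (B ^ j) *ᵥ x := by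
    rw [pow_succ, ← mulVec_mulVec, hBS, mulVec_sub, mulVec_smul]
  simpa using le_pow_succ_mul_of_eq_mul_sub (s := fun j => w ((B ^ j) *ᵥ S))
    (b := fun j => w ((B ^ j) *ᵥ x)) (sub_nonneg.2 hlamμ)
    (fun j => hw _ (hK.mulVec_mem_of_hasSum_neumann hA (hAB.pow_right j) (hlam j) hμ hS))
    (fun j => hw _ (hlam j)) (fun j => by simp only [hrec, map_sub, map_smul, smul_eq_mul]) j

end IsProperCone

theorem Polynomial.tendsto_sub_pow_succ_mul_nhdsGT {p : ℝ[X]} {n : ℕ} (hp : p ≠ 0)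
    (hdeg : p.natDegree ≤ n) {f P : ℝ → ℝ} {a : ℝ} (hP : ContinuousAt P a)
    (hf : ∀ μ > a, p.eval μ * f μ = P μ) :
    Tendsto (fun μ => (μ - a) ^ (n + 1) * f μ) (𝓝[>] a) (𝓝 0) := by
  classical
  set k := p.rootMultiplicity a
  set q := p /ₘ (X - C a) ^ k
  have hfact : (X - C a) ^ k * q = p := p.pow_mul_divByMonic_rootMultiplicity_eq a
  have hqa : q.eval a ≠ 0 := eval_divByMonic_pow_rootMultiplicity_ne_zero a hp
  have hk : k ≤ n := by
    calc k = p.roots.count a := (count_roots p).symm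
      _ ≤ n := (Multiset.count_le_card _ _).trans ((card_roots' p).trans hdeg)
  have hlim : Tendsto (fun μ => (μ - a) ^ (n + 1 - k) * P μ / q.eval μ) (𝓝[>] a) (𝓝 0) := by
    have hcont : ContinuousAt (fun μ => (μ - a) ^ (n + 1 - k) * P μ / q.eval μ) a :=
      (((continuous_id.sub continuous_const).pow _).continuousAt.mul hP).div
        q.continuous.continuousAt hqa
    simpa [zero_pow (Nat.sub_ne_zero_of_lt (Nat.lt_succ_of_le hk))] using
      hcont.continuousWithinAt.tendsto
  refine hlim.congr' ?_
  filter_upwards [self_mem_nhdsWithin,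
    nhdsWithin_le_nhds (q.continuous.continuousAt.eventually_ne hqa)] with μ hμ hqμ
  rw [← hf μ hμ, ← hfact, eval_mul, eval_pow, eval_sub, eval_X, eval_C]
  have hμa : μ - a ≠ 0 := sub_ne_zero.2 (ne_of_gt hμ)
  have hsplit : (μ - a) ^ (n + 1) = (μ - a) ^ (n + 1 - k) * (μ - a) ^ k := by
    rw [← pow_add, Nat.sub_add_cancel (hk.trans n.le_succ)]
  rw [hsplit]
  field_simp

theorem stmt18_general {n : ℕ} {K : Set (Fin n → ℝ)} (hK : IsProperCone K)
    (A : Matrix (Fin n) (Fin n) ℝ) (hA : ∀ v ∈ K, A.mulVec v ∈ K)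
    (x : Fin n → ℝ) (lam : ℝ)
    (h : ∀ j : ℕ, ((A - lam • (1 : Matrix (Fin n) (Fin n) ℝ)) ^ j).mulVec x ∈ K ∧
      ((A - lam • (1 : Matrix (Fin n) (Fin n) ℝ)) ^ j).mulVec x ≠ 0) :
    lam < localRho A x := by
  by_contra! hρ
  obtain ⟨w, hwK, hwpos⟩ := hK.exists_dual_pos (h n).1 (h n).2
  have hS (μ : ℝ) (hμ : lam < μ) :=
    (summable_neumann_of_localRho_lt A x (hρ.trans_lt hμ)).hasSum
  have hμ0 {μ : ℝ} (hμ : lam < μ) : 0 < μ := (localRho_nonneg A x).trans_lt (hρ.trans_lt hμ)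
  have hP : Continuous fun μ => w (adjugate (scalar (Fin n) μ - A) *ᵥ x) := by
    simp only [scalar_apply]
    fun_prop
  have hpole := Polynomial.tendsto_sub_pow_succ_mul_nhdsGT (charpoly_monic A).ne_zero
    ((charpoly_natDegree_eq_dim A).trans (Fintype.card_fin n)).le hP.continuousAt
    (f := fun μ => w (∑' m : ℕ, (μ⁻¹) ^ (m + 1) • ((A ^ m) *ᵥ x))) fun μ hμ => by
      rw [← smul_eq_mul, ← map_smul, eval_charpoly_smul_eq_adjugate_mulVec
        (mulVec_eq_of_hasSum_neumann (hμ0 hμ).ne' (hS μ hμ))]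
  refine (ge_of_tendsto hpole (eventually_nhdsWithin_of_forall fun μ hμ => ?_)).not_gt hwpos
  exact hK.apply_sub_smul_pow_mulVec_le hA (fun j => (h j).1) (hμ0 hμ) hμ.le (hS μ hμ) hwK n

theorem stmt18 {n : ℕ} {K : Set (Fin n → ℝ)} (hK : IsProperCone K)
    (A : Matrix (Fin n) (Fin n) ℝ) (hA : ∀ v ∈ K, A.mulVec v ∈ K)
    (x : Fin n → ℝ) (hx : x ∈ K) (lam : ℝ)
    (h : ∀ j : ℕ, ((A - lam • (1 : Matrix (Fin n) (Fin n) ℝ)) ^ j).mulVec x ∈ K ∧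
      ((A - lam • (1 : Matrix (Fin n) (Fin n) ℝ)) ^ j).mulVec x ≠ 0) :
    lam < localRho A x :=
  stmt18_general hK A hA x lam h
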